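/- arXiv:1808.08075 — 2 statements merged into one kernel-verified Lean document; each statement's English description precedes it below -/
import Mathlib

section
/- With the active control functions u₁, u₂, u₃ defined by u₁ = -Cp + y_r² - ωx - C x_r + B y_r + V₁, u₂ = -μz + xz + (μ-1)y + V₂, u₃ = -x_r y_r - xy + 1 - Ay + (b-1)z + V₃, the error variables e₁ = x_r - x, e₂ = y_r - y, e₃ = z_r - z satisfy the linear system e₁' = (ω - C)e₁ + B e₂ + V₁, e₂' = μ e₃ - μ e₂ + V₂, e₃' = A e₂ - b e₃ + V₃, whenever (x,y,z) solves the Vallis system and (x_r,y_r,z_r) solves the controlled BG system. -/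
/-- With the active control functions u₁, u₂, u₃, the synchronization errors between the
Vallis system (drive) and the controlled BG system (response) satisfy the stated linear
error system. -/
theorem active_control_error_system
    (B C p ω μ A b : ℝ) (x y z xr yr zr V₁ V₂ V₃ u₁ u₂ u₃ : ℝ → ℝ)
    -- Vallis (drive) system
    (hx : ∀ t, HasDerivAt x (B * y t - C * (x t + p)) t)
    (hy : ∀ t, HasDerivAt y (x t * z t - y t) t)
    (hz : ∀ t, HasDerivAt z (-(x t * y t) - z t + 1) t)
    -- controlled BG (response) system
    (hxr : ∀ t, HasDerivAt xr (ω * xr t - (yr t) ^ 2 + u₁ t) t)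
    (hyr : ∀ t, HasDerivAt yr (μ * (zr t - yr t) + u₂ t) t)
    (hzr : ∀ t, HasDerivAt zr (A * yr t - b * zr t + xr t * yr t + u₃ t) t)
    -- active control functions
    (hu₁ : ∀ t, u₁ t = -(C * p) + (yr t) ^ 2 - ω * x t - C * xr t + B * yr t + V₁ t)
    (hu₂ : ∀ t, u₂ t = -(μ * z t) + x t * z t + (μ - 1) * y t + V₂ t)
    (hu₃ : ∀ t, u₃ t = -(xr t * yr t) - x t * y t + 1 - A * y t + (b - 1) * z t + V₃ t) :
    (∀ t, HasDerivAt (fun s => xr s - x s)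
        ((ω - C) * (xr t - x t) + B * (yr t - y t) + V₁ t) t) ∧
    (∀ t, HasDerivAt (fun s => yr s - y s)
        (μ * (zr t - z t) - μ * (yr t - y t) + V₂ t) t) ∧
    (∀ t, HasDerivAt (fun s => zr s - z s)
        (A * (yr t - y t) - b * (zr t - z t) + V₃ t) t) := by
  refine ⟨fun t => ?_, fun t => ?_, fun t => ?_⟩
  · exact ((hxr t).sub (hx t)).congr_deriv (by rw [hu₁ t]; ring)
  · exact ((hyr t).sub (hy t)).congr_deriv (by rw [hu₂ t]; ring)
  · exact ((hzr t).sub (hz t)).congr_deriv (by rw [hu₃ t]; ring)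
end

section
/- For α > 0 and k ∈ ℕ, the Adams quadrature weights a_{j,k+1} defined by a_{0,k+1} = k^{α+1} - (k - α)(k+1)^α, a_{j,k+1} = (k-j+2)^{α+1} + (k-j)^{α+1} - 2(k-j+1)^{α+1} for 1 ≤ j ≤ k, and a_{k+1,k+1} = 1, are all positive. -/
/-- The Adams quadrature weight a_{j, k+1}. -/
noncomputable def adamsWeight (α : ℝ) (k j : ℕ) : ℝ :=
  if j = 0 then (k : ℝ) ^ (α + 1) - ((k : ℝ) - α) * ((k : ℝ) + 1) ^ α
  else if j = k + 1 then 1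
  else ((k : ℝ) - (j : ℝ) + 2) ^ (α + 1) + ((k : ℝ) - (j : ℝ)) ^ (α + 1)
    - 2 * ((k : ℝ) - (j : ℝ) + 1) ^ (α + 1)

/-!
For `1 ≤ j ≤ k` the weight is the second difference of the strictly convex function
`t ↦ t ^ (α + 1)` at `k - j ≥ 0`. For `j = 0`, writing `(k + 1) ^ (α + 1) = (k + 1) * (k + 1) ^ α`
turns the weight into `k ^ (α + 1)` minus the tangent line of `t ↦ t ^ (α + 1)` at `k + 1`,
evaluated at `k`; Bernoulli's inequality makes this positive.
-/

open Real

lemma two_mul_add_one_rpow_lt {p x : ℝ} (hp : 1 < p) (hx : 0 ≤ x) :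
    2 * (x + 1) ^ p < (x + 2) ^ p + x ^ p := by
  have h := (strictConvexOn_rpow hp).2 (Set.mem_Ici.2 hx) (Set.mem_Ici.2 (by linarith : 0 ≤ x + 2))
    (by linarith) (by norm_num : (0 : ℝ) < 1 / 2) (by norm_num : (0 : ℝ) < 1 / 2) (by norm_num)
  simp only [smul_eq_mul, show 1 / 2 * x + 1 / 2 * (x + 2) = x + 1 by ring] at h
  linarith

lemma add_one_rpow_sub_mul_rpow_lt {p x : ℝ} (hp : 1 < p) (hx : 0 ≤ x) :
    (x + 1) ^ p - p * (x + 1) ^ (p - 1) < x ^ p := by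
  have hy : 0 < x + 1 := by linarith
  have bernoulli := one_add_mul_self_lt_rpow_one_add (s := -(x + 1)⁻¹)
    (neg_le_neg (inv_le_one_of_one_le₀ (by linarith))) (neg_ne_zero.2 (inv_ne_zero hy.ne')) hp
  have hbase : 1 + -(x + 1)⁻¹ = x / (x + 1) := by field_simp; ring
  rw [hbase, div_rpow hx hy.le, lt_div_iff₀ (rpow_pos_of_pos hy p)] at bernoulli
  calc (x + 1) ^ p - p * (x + 1) ^ (p - 1)
      = (1 + p * -(x + 1)⁻¹) * (x + 1) ^ p := by rw [rpow_sub_one hy.ne']; field_simp; ring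
    _ < x ^ p := bernoulli

/-- All the Adams quadrature weights are positive. -/
theorem adamsWeight_pos (α : ℝ) (hα : 0 < α) (k : ℕ) :
    ∀ j ≤ k + 1, 0 < adamsWeight α k j := by
  intro j hj
  have hp : 1 < α + 1 := by linarith
  unfold adamsWeight
  split_ifs with h0 hlast
  · have h := add_one_rpow_sub_mul_rpow_lt hp k.cast_nonneg
    rw [add_sub_cancel_right, rpow_add_one (by positivity)] at h
    linarith
  · exact one_pos
  · have hjk : (j : ℝ) ≤ k := by exact_mod_cast (show j ≤ k by omega)
    linarith [two_mul_add_one_rpow_lt hp (sub_nonneg.2 hjk)]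
end
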